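/- arXiv:2003.00363 — 2 statements merged into one kernel-verified Lean document; each statement's English description precedes it below -/
import Mathlib

section
/- Let m ≥ 1 and let c⁽⁰⁾, c⁽¹⁾, c⁽²⁾ be any three permutations of {1, 2, …, m}. Then there exist two distinct indices k, ℓ ∈ {0, 1, 2} and a common subpermutation of length at least m^(1/3) contained in both c⁽ᵏ⁾ and c⁽ˡ⁾; that is, there exist subsequences of c⁽ᵏ⁾ and of c⁽ˡ⁾, each of length at least m^(1/3), that are order-isomorphic to each other. -/
/-!
Put `f = c₁⁻¹ ∘ c₀` and `g = c₂⁻¹ ∘ c₀`. Positions of `c₀` along which `f` increases carry a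
pattern common to `c₀` and `c₁`, likewise for `g` and `c₂`, and positions along which `f` and `g`
both increase carry a pattern common to `c₁` and `c₂`. Label each position `t` by the lengths of
the longest `f`- and `g`-increasing subsequences ending below `t`. If both labels stay below `n`,
where `n ^ 3 < m`, then more than `n` positions share a label, and along them `f` and `g` both
decrease, since an increase would raise the label. Read backwards, they give a pattern common to
`c₁` and `c₂` of length `n + 1 ≥ m ^ (1/3)`.
-/

open Finset Function

theorem strictMono_snoc {α : Type*} [Preorder α] {n : ℕ} {x : Fin n → α} (hx : StrictMono x)
    {y : α} (hy : ∀ a, x a < y) : StrictMono (Fin.snoc x y : Fin (n + 1) → α) := by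
  intro a b hab
  obtain ⟨a, rfl⟩ := Fin.eq_castSucc_of_ne_last (Fin.ne_last_of_lt hab)
  obtain ⟨b, rfl⟩ | rfl := b.eq_castSucc_or_eq_last
  · simpa using hx (Fin.castSucc_lt_castSucc_iff.mp hab)
  · simpa using hy a

section Chains

variable {β : Type*} [LinearOrder β] {m : ℕ} (f : Fin m → β)

def HasChainBelow (t : Fin m) (L : ℕ) : Prop :=
  ∃ i : Fin L → Fin m, StrictMono i ∧ StrictMono (f ∘ i) ∧ ∀ a, i a < t ∧ f (i a) < f t

open Classical in
noncomputable def chainLenBelow (t : Fin m) : ℕ :=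
  Nat.findGreatest (HasChainBelow f t) m

variable {f}

theorem HasChainBelow.le {t : Fin m} {L : ℕ} (h : HasChainBelow f t L) : L ≤ m :=
  let ⟨_, hi, _⟩ := h; Fin.le_of_injective _ hi.injective

theorem HasChainBelow.snoc {s : Fin m} {L : ℕ} (h : HasChainBelow f s L) :
    ∃ i : Fin (L + 1) → Fin m, StrictMono i ∧ StrictMono (f ∘ i) ∧
      ∀ a, i a ≤ s ∧ f (i a) ≤ f s := by
  obtain ⟨i, hi, hfi, hlt⟩ := h
  refine ⟨Fin.snoc i s, strictMono_snoc hi fun a => (hlt a).1, ?_, fun a => ?_⟩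
  · rw [Fin.comp_snoc]
    exact strictMono_snoc hfi fun a => (hlt a).2
  · obtain ⟨a, rfl⟩ | rfl := a.eq_castSucc_or_eq_last
    · simpa using ⟨(hlt a).1.le, (hlt a).2.le⟩
    · simp

theorem hasChainBelow_chainLenBelow (t : Fin m) : HasChainBelow f t (chainLenBelow f t) := by
  classical
  exact Nat.findGreatest_spec (Nat.zero_le m)
    ⟨Fin.elim0, fun a => a.elim0, fun a => a.elim0, fun a => a.elim0⟩

theorem chainLenBelow_lt {s t : Fin m} (hst : s < t) (hf : f s < f t) :
    chainLenBelow f s < chainLenBelow f t := by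
  classical
  obtain ⟨i, hi, hfi, hle⟩ := (hasChainBelow_chainLenBelow (f := f) s).snoc
  have h : HasChainBelow f t (chainLenBelow f s + 1) :=
    ⟨i, hi, hfi, fun a => ⟨(hle a).1.trans_lt hst, (hle a).2.trans_lt hf⟩⟩
  exact Nat.le_findGreatest h.le h

theorem exists_strictMono_of_le_chainLenBelow {t : Fin m} {p : ℕ} (hp : p ≤ chainLenBelow f t) :
    ∃ i : Fin (p + 1) → Fin m, StrictMono i ∧ StrictMono (f ∘ i) := by
  obtain ⟨i, hi, hfi, -⟩ := (hasChainBelow_chainLenBelow (f := f) t).snoc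
  have hcast := Fin.strictMono_castLE (Nat.succ_le_succ hp)
  exact ⟨i ∘ Fin.castLE (Nat.succ_le_succ hp), hi.comp hcast, hfi.comp hcast⟩

theorem lt_of_chainLenBelow_eq (hf : Injective f) {u v : Fin m} (huv : u < v)
    (h : chainLenBelow f u = chainLenBelow f v) : f v < f u :=
  lt_of_le_of_ne (not_lt.mp fun hlt => (chainLenBelow_lt huv hlt).ne h) (hf.ne huv.ne')

end Chains

theorem exists_increasing_or_codirected {β : Type*} [LinearOrder β] {m : ℕ} {f g : Fin m → β}
    (hf : Injective f) (hg : Injective g) {p q r : ℕ} (h : p * q * r < m) :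
    (∃ i : Fin (p + 1) → Fin m, StrictMono i ∧ StrictMono (f ∘ i)) ∨
    (∃ i : Fin (q + 1) → Fin m, StrictMono i ∧ StrictMono (g ∘ i)) ∨
    ∃ i : Fin (r + 1) → Fin m, StrictMono (f ∘ i) ∧ StrictMono (g ∘ i) := by
  by_cases hp : ∃ t, p ≤ chainLenBelow f t
  · exact .inl (exists_strictMono_of_le_chainLenBelow hp.choose_spec)
  by_cases hq : ∃ t, q ≤ chainLenBelow g t
  · exact .inr (.inl (exists_strictMono_of_le_chainLenBelow hq.choose_spec))
  simp only [not_exists, not_le] at hp hq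
  refine .inr (.inr ?_)
  have hmaps : ∀ t ∈ (univ : Finset (Fin m)),
      (chainLenBelow f t, chainLenBelow g t) ∈ range p ×ˢ range q := by
    simp [hp, hq]
  obtain ⟨y, -, hy⟩ := exists_lt_card_fiber_of_mul_lt_card_of_maps_to hmaps (by simpa using h)
  set F := (univ : Finset (Fin m)).filter fun t => (chainLenBelow f t, chainLenBelow g t) = y
  have hanti : ∀ u ∈ F, ∀ v ∈ F, u < v → f v < f u ∧ g v < g u := by
    intro u hu v hv huv
    have heq := (mem_filter.mp hu).2.trans (mem_filter.mp hv).2.symm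
    exact ⟨lt_of_chainLenBelow_eq hf huv (congrArg Prod.fst heq),
      lt_of_chainLenBelow_eq hg huv (congrArg Prod.snd heq)⟩
  obtain ⟨G, hGF, hG⟩ := exists_subset_card_eq (hy : r + 1 ≤ #F)
  let i : Fin (r + 1) → Fin m := G.orderEmbOfFin hG ∘ Fin.rev
  have hi : StrictAnti i := (G.orderEmbOfFin hG).strictMono.comp_strictAnti Fin.rev_strictAnti
  have hmem : ∀ a, i a ∈ F := fun a => hGF (G.orderEmbOfFin_mem hG _)
  exact ⟨i, fun a b hab => (hanti _ (hmem b) _ (hmem a) (hi hab)).1,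
    fun a b hab => (hanti _ (hmem b) _ (hmem a) (hi hab)).2⟩

theorem Nat.exists_pow_lt_le_succ_pow {k m : ℕ} (hk : k ≠ 0) (hm : 0 < m) :
    ∃ n, n ^ k < m ∧ m ≤ (n + 1) ^ k := by
  classical
  have hex : ∃ n, m ≤ (n + 1) ^ k := ⟨m, (Nat.le_succ m).trans (Nat.le_self_pow hk _)⟩
  refine ⟨Nat.find hex, ?_, Nat.find_spec hex⟩
  rcases hn : Nat.find hex with _ | n
  · simpa [hk] using hm
  · exact not_le.mp (Nat.find_min hex (hn ▸ Nat.lt_succ_self n))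

/-- Among any three permutations of `[m]` (here permutations of `Fin m`), two distinct
ones contain a common subpermutation of length at least `m^(1/3)`: they have
subsequences (given by strictly increasing index maps) of that length that are
order-isomorphic to each other. -/
theorem three_perms_common_subpermutation (m : ℕ) (hm : 1 ≤ m)
    (c : Fin 3 → Equiv.Perm (Fin m)) :
    ∃ k ℓ : Fin 3, k ≠ ℓ ∧
      ∃ L : ℕ, (m : ℝ) ^ ((1 : ℝ) / 3) ≤ (L : ℝ) ∧
        ∃ i j : Fin L → Fin m, StrictMono i ∧ StrictMono j ∧
          ∀ a b, (c k (i a) < c k (i b) ↔ c ℓ (j a) < c ℓ (j b)) := by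
  obtain ⟨n, hlt, hle⟩ := Nat.exists_pow_lt_le_succ_pow three_ne_zero hm
  have hroot : (m : ℝ) ^ ((1 : ℝ) / 3) ≤ ((n + 1 : ℕ) : ℝ) := by
    rw [one_div, Real.rpow_inv_le_iff_of_pos (by positivity) (by positivity) (by norm_num)]
    exact_mod_cast hle
  let f := (c 1).symm ∘ c 0
  let g := (c 2).symm ∘ c 0
  have hf : ∀ t, c 1 (f t) = c 0 t := fun t => (c 1).apply_symm_apply _
  have hg : ∀ t, c 2 (g t) = c 0 t := fun t => (c 2).apply_symm_apply _
  rcases exists_increasing_or_codirected (f := f) (g := g)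
      ((c 1).symm.injective.comp (c 0).injective) ((c 2).symm.injective.comp (c 0).injective)
      (p := n) (q := n) (r := n) (by simpa [pow_three, mul_assoc] using hlt)
    with ⟨i, hi, hfi⟩ | ⟨i, hi, hgi⟩ | ⟨i, hfi, hgi⟩
  · exact ⟨0, 1, by decide, n + 1, hroot, i, f ∘ i, hi, hfi,
      fun a b => by simp only [comp_apply, hf]⟩
  · exact ⟨0, 2, by decide, n + 1, hroot, i, g ∘ i, hi, hgi,
      fun a b => by simp only [comp_apply, hg]⟩
  · exact ⟨1, 2, by decide, n + 1, hroot, f ∘ i, g ∘ i, hfi, hgi,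
      fun a b => by simp only [comp_apply, hf, hg]⟩
end

section
/- Let p = (p_1,…,p_n) be a permutation of {1,…,n}, let r ≥ 1, and partition the position set {1,…,n} into r pairwise disjoint intervals P_1,…,P_r and the value set {1,…,n} into r pairwise disjoint intervals V_1,…,V_r. Form the bipartite graph B on two copies of {1,…,r} where (i, j) is an edge whenever there are at least two positions x ∈ P_i with p_x ∈ V_j. Then for every matching M in B, the permutation p contains a pair of twins of length |M|. -/
/-- `HasTwins n L p` means the permutation `p` of `{0,…,n-1}` contains a pair of twins
of length `L`: two order-isomorphic subsequences with disjoint index sets. -/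
def HasTwins (n L : ℕ) (p : Equiv.Perm (Fin n)) : Prop :=
  ∃ i j : Fin L → Fin n, StrictMono i ∧ StrictMono j ∧
    (∀ k l, i k ≠ j l) ∧
    (∀ k l, p (i k) < p (i l) ↔ p (j k) < p (j l))

/-!
For each edge `(i, j)` of the matching pick two positions `x < y` in `P i` with values in `V j`.
Pairwise disjoint intervals are ordered as whole blocks, so listing the edges by position, the
`x`'s and the `y`'s form two interleaved, hence disjoint, subsequences. Any two edges have
distinct `V`-blocks, so the relative order of their values is decided by the blocks alone and is
the same for the `x`'s as for the `y`'s.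
-/

open Function

theorem Set.OrdConnected.lt_of_lt_of_disjoint {α : Type*} [LinearOrder α] {A B : Set α}
    (hA : A.OrdConnected) (hB : B.OrdConnected) (hAB : Disjoint A B) {a b c d : α}
    (ha : a ∈ A) (hb : b ∈ A) (hc : c ∈ B) (hd : d ∈ B) (hac : a < c) : b < d := by
  by_contra! hdb
  rcases le_or_gt c b with hcb | hbc
  · exact hAB.notMem_of_mem_left (hA.out ha hb ⟨hac.le, hcb⟩) hc
  · exact hAB.notMem_of_mem_left hb (hB.out hd hc ⟨hdb, hbc.le⟩)

theorem exists_strictMono_comp_of_injective {ι β : Type*} [Fintype ι] [LinearOrder β]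
    {f : ι → β} (hf : Injective f) : ∃ e : Fin (Fintype.card ι) → ι, StrictMono (f ∘ e) := by
  classical
  have hcard : (Finset.univ.image f).card = Fintype.card ι :=
    Finset.card_image_of_injective _ hf
  set σ := (Finset.univ.image f).orderEmbOfFin hcard
  have hpre : ∀ k, ∃ i, f i = σ k := fun k => by
    obtain ⟨i, -, hi⟩ := Finset.mem_image.mp ((Finset.univ.image f).orderEmbOfFin_mem hcard k)
    exact ⟨i, hi⟩
  choose e he using hpre
  refine ⟨e, fun k l hkl => ?_⟩
  simpa only [comp_apply, he] using σ.strictMono hkl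

theorem hasTwins_of_interleaved {n L : ℕ} {p : Equiv.Perm (Fin n)} {i j : Fin L → Fin n}
    (hi : StrictMono i) (hij : ∀ k, i k < j k) (hji : ∀ k l, k < l → j k < i l)
    (hpattern : ∀ k l, p (i k) < p (i l) ↔ p (j k) < p (j l)) : HasTwins n L p := by
  refine ⟨i, j, hi, fun k l hkl => (hji k l hkl).trans (hij l), fun k l => ?_, hpattern⟩
  rcases lt_trichotomy k l with hkl | rfl | hlk
  · exact ((hi hkl).trans (hij l)).ne
  · exact (hij k).ne
  · exact (hji l k hlk).ne'

theorem hasTwins_of_blocks {n : ℕ} {ι : Type*} [Fintype ι] {p : Equiv.Perm (Fin n)}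
    {P V : ι → Set (Fin n)} (hPconv : ∀ e, (P e).OrdConnected) (hVconv : ∀ e, (V e).OrdConnected)
    (hPdisj : Pairwise (Disjoint on P)) (hVdisj : Pairwise (Disjoint on V)) {x y : ι → Fin n}
    (hxy : ∀ e, x e < y e) (hxP : ∀ e, x e ∈ P e) (hyP : ∀ e, y e ∈ P e)
    (hxV : ∀ e, p (x e) ∈ V e) (hyV : ∀ e, p (y e) ∈ V e) :
    HasTwins n (Fintype.card ι) p := by
  have hx : Injective x := fun e e' h => by
    by_contra hne
    exact (hPdisj hne).notMem_of_mem_left (hxP e) (h ▸ hxP e')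
  obtain ⟨E, hE⟩ := exists_strictMono_comp_of_injective hx
  have hEinj : Injective E := hE.injective.of_comp
  refine hasTwins_of_interleaved (i := x ∘ E) (j := y ∘ E) hE (fun k => hxy (E k))
    (fun k l hkl => ?_) (fun k l => ?_)
  · exact (hPconv (E k)).lt_of_lt_of_disjoint (hPconv (E l)) (hPdisj (hEinj.ne hkl.ne))
      (hxP _) (hyP _) (hxP _) (hxP _) (hE hkl)
  · rcases eq_or_ne k l with rfl | hkl
    · simp only [lt_self_iff_false]
    have hVkl := hVdisj (hEinj.ne hkl)
    exact ⟨(hVconv _).lt_of_lt_of_disjoint (hVconv _) hVkl (hxV _) (hyV _) (hxV _) (hyV _),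
      (hVconv _).lt_of_lt_of_disjoint (hVconv _) hVkl (hyV _) (hxV _) (hyV _) (hxV _)⟩

theorem matching_gives_twins_general (n r : ℕ) (p : Equiv.Perm (Fin n))
    (P V : Fin r → Finset (Fin n))
    -- each P i and each V j is an interval (order-convex set)
    (hPconv : ∀ i, ∀ x y z : Fin n, x ∈ P i → z ∈ P i → x ≤ y → y ≤ z → y ∈ P i)
    (hVconv : ∀ j, ∀ x y z : Fin n, x ∈ V j → z ∈ V j → x ≤ y → y ≤ z → y ∈ V j)
    -- the P's partition the positions, the V's partition the values
    (hPdisj : ∀ i i', i ≠ i' → Disjoint (P i) (P i'))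
    (hVdisj : ∀ j j', j ≠ j' → Disjoint (V j) (V j'))
    -- M is a matching consisting of edges of the bipartite graph B
    (M : Finset (Fin r × Fin r))
    (hedge : ∀ e ∈ M, 2 ≤ ((P e.1).filter (fun x => p x ∈ V e.2)).card)
    (hmatch : ∀ e ∈ M, ∀ e' ∈ M, e ≠ e' → e.1 ≠ e'.1 ∧ e.2 ≠ e'.2) :
    HasTwins n M.card p := by
  have hconv : ∀ s : Finset (Fin n), (∀ x y z, x ∈ s → z ∈ s → x ≤ y → y ≤ z → y ∈ s) →
      (s : Set (Fin n)).OrdConnected := fun s hs => ⟨fun x hx z hz y hy => hs x y z hx hz hy.1 hy.2⟩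
  have hne : ∀ e e' : M, e ≠ e' → e.1.1 ≠ e'.1.1 ∧ e.1.2 ≠ e'.1.2 := fun e e' h =>
    hmatch e e.2 e' e'.2 (Subtype.coe_ne_coe.mpr h)
  set S : M → Finset (Fin n) := fun e => (P e.1.1).filter (fun x => p x ∈ V e.1.2)
  have hS : ∀ e, 1 < (S e).card := fun e => hedge e e.2
  have hSne : ∀ e, (S e).Nonempty := fun e => Finset.card_pos.mp (zero_lt_one.trans (hS e))
  have hmin := fun e => Finset.mem_filter.mp ((S e).min'_mem (hSne e))
  have hmax := fun e => Finset.mem_filter.mp ((S e).max'_mem (hSne e))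
  rw [← Fintype.card_coe M]
  exact hasTwins_of_blocks (P := fun e : M => P e.1.1) (V := fun e : M => V e.1.2)
    (fun e => hconv _ (hPconv _)) (fun e => hconv _ (hVconv _))
    (fun e e' h => Finset.disjoint_coe.mpr (hPdisj _ _ (hne e e' h).1))
    (fun e e' h => Finset.disjoint_coe.mpr (hVdisj _ _ (hne e e' h).2))
    (fun e => (S e).min'_lt_max'_of_card (hS e)) (fun e => (hmin e).1) (fun e => (hmax e).1)
    (fun e => (hmin e).2) (fun e => (hmax e).2)

/-- Partition the positions of a permutation `p` of `{0,…,n-1}` into `r` intervals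
`P 1,…,P r` and the values into `r` intervals `V 1,…,V r`, and form the bipartite graph
on two copies of `{1,…,r}` where `(i, j)` is an edge when at least two positions in
`P i` carry values in `V j`. Then every matching `M` in this graph yields a pair of
twins of length `M.card` in `p`. -/
theorem matching_gives_twins (n r : ℕ) (hr : 1 ≤ r) (p : Equiv.Perm (Fin n))
    (P V : Fin r → Finset (Fin n))
    -- each P i and each V j is an interval (order-convex set)
    (hPconv : ∀ i, ∀ x y z : Fin n, x ∈ P i → z ∈ P i → x ≤ y → y ≤ z → y ∈ P i)
    (hVconv : ∀ j, ∀ x y z : Fin n, x ∈ V j → z ∈ V j → x ≤ y → y ≤ z → y ∈ V j)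
    -- the P's partition the positions, the V's partition the values
    (hPdisj : ∀ i i', i ≠ i' → Disjoint (P i) (P i'))
    (hVdisj : ∀ j j', j ≠ j' → Disjoint (V j) (V j'))
    (hPcover : ∀ x : Fin n, ∃ i, x ∈ P i)
    (hVcover : ∀ y : Fin n, ∃ j, y ∈ V j)
    -- M is a matching consisting of edges of the bipartite graph B
    (M : Finset (Fin r × Fin r))
    (hedge : ∀ e ∈ M, 2 ≤ ((P e.1).filter (fun x => p x ∈ V e.2)).card)
    (hmatch : ∀ e ∈ M, ∀ e' ∈ M, e ≠ e' → e.1 ≠ e'.1 ∧ e.2 ≠ e'.2) :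
    HasTwins n M.card p :=
  matching_gives_twins_general n r p P V hPconv hVconv hPdisj hVdisj M hedge hmatch
end
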